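/- Sensitivity of the optimal value: for the QP min (u-u_d)ᵀP(u-u_d) s.t. aᵀu + b ≥ 0 with P positive definite, a ≠ 0, and aᵀu_d + b < 0, the optimal cost is J*(b) = (aᵀu_d + b)²/(aᵀP⁻¹a), and its derivative with respect to b equals −λ*, the negative of the optimal Lagrange multiplier λ* = −2(aᵀu_d + b)/(aᵀP⁻¹a). -/

import Mathlib

/-!
With `q = aᵀP⁻¹a > 0`, completing the square in the inner product `⟪x, y⟫ = xᵀPy` gives
`vᵀPv = ‖v - (aᵀv / q) P⁻¹a‖²_P + (aᵀv)² / q` (Cauchy–Schwarz against `P⁻¹a`). Hence on the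
half-space `c ≤ aᵀv` with `c ≥ 0` the cost is at least `c² / q`, with equality at
`v = (c / q) P⁻¹a`. The substitution `v = u - u_d` turns the constraint into
`-(aᵀu_d + b) ≤ aᵀv`, whose offset is positive exactly because the constraint is active at `u_d`.
-/

open Matrix

namespace Matrix
variable {n : Type*} [Fintype n] {P : Matrix n n ℝ}

lemma IsHermitian.dotProduct_mulVec_comm (hP : P.IsHermitian) (v w : n → ℝ) :
    v ⬝ᵥ P *ᵥ w = w ⬝ᵥ P *ᵥ v := by
  rw [dotProduct_mulVec, ← mulVec_transpose, ← conjTranspose_eq_transpose_of_trivial, hP.eq,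
    dotProduct_comm]

lemma IsHermitian.dotProduct_mulVec_sub_smul (hP : P.IsHermitian) (v w : n → ℝ) (t : ℝ) :
    (v - t • w) ⬝ᵥ P *ᵥ (v - t • w) =
      v ⬝ᵥ P *ᵥ v - 2 * t * (w ⬝ᵥ P *ᵥ v) + t ^ 2 * (w ⬝ᵥ P *ᵥ w) := by
  simp only [mulVec_sub, mulVec_smul, sub_dotProduct, dotProduct_sub, smul_dotProduct,
    dotProduct_smul, smul_eq_mul, hP.dotProduct_mulVec_comm v w]
  ring

variable [DecidableEq n]

lemma PosDef.dotProduct_inv_mulVec_pos (hP : P.PosDef) {a : n → ℝ} (ha : a ≠ 0) :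
    0 < a ⬝ᵥ P⁻¹ *ᵥ a := by
  simpa using hP.inv.dotProduct_mulVec_pos ha

lemma PosDef.mulVec_inv_mulVec (hP : P.PosDef) (a : n → ℝ) : P *ᵥ P⁻¹ *ᵥ a = a := by
  rw [mulVec_mulVec, mul_nonsing_inv _ hP.det_pos.ne'.isUnit, one_mulVec]

lemma PosDef.sq_dotProduct_div_le (hP : P.PosDef) {a : n → ℝ} (ha : a ≠ 0) (v : n → ℝ) :
    (a ⬝ᵥ v) ^ 2 / (a ⬝ᵥ P⁻¹ *ᵥ a) ≤ v ⬝ᵥ P *ᵥ v := by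
  have hq := hP.dotProduct_inv_mulVec_pos ha
  have hwv : P⁻¹ *ᵥ a ⬝ᵥ P *ᵥ v = a ⬝ᵥ v := by
    rw [hP.isHermitian.dotProduct_mulVec_comm, hP.mulVec_inv_mulVec, dotProduct_comm]
  have hww : P⁻¹ *ᵥ a ⬝ᵥ P *ᵥ P⁻¹ *ᵥ a = a ⬝ᵥ P⁻¹ *ᵥ a := by
    rw [hP.mulVec_inv_mulVec, dotProduct_comm]
  have h := hP.posSemidef.dotProduct_mulVec_nonneg (v - (a ⬝ᵥ v / (a ⬝ᵥ P⁻¹ *ᵥ a)) • P⁻¹ *ᵥ a)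
  rw [star_trivial, hP.isHermitian.dotProduct_mulVec_sub_smul, hwv, hww] at h
  rw [div_le_iff₀ hq]
  field_simp at h
  nlinarith

lemma PosDef.isLeast_quadForm_halfspace (hP : P.PosDef) {a : n → ℝ} (ha : a ≠ 0) {c : ℝ}
    (hc : 0 ≤ c) :
    IsLeast ((fun v => v ⬝ᵥ P *ᵥ v) '' {v | c ≤ a ⬝ᵥ v}) (c ^ 2 / (a ⬝ᵥ P⁻¹ *ᵥ a)) := by
  have hq := hP.dotProduct_inv_mulVec_pos ha
  refine ⟨⟨(c / (a ⬝ᵥ P⁻¹ *ᵥ a)) • P⁻¹ *ᵥ a, ?feasible, ?value⟩, ?lower⟩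
  case feasible =>
    simp only [Set.mem_ofPred_eq, dotProduct_smul, smul_eq_mul]
    rw [div_mul_cancel₀ _ hq.ne']
  case value =>
    simp only [mulVec_smul, smul_dotProduct, dotProduct_smul, smul_eq_mul, hP.mulVec_inv_mulVec,
      dotProduct_comm (P⁻¹ *ᵥ a) a]
    field_simp
  case lower =>
    rintro _ ⟨v, hv, rfl⟩
    have hsq : c ^ 2 ≤ (a ⬝ᵥ v) ^ 2 := pow_le_pow_left₀ hc hv 2
    exact (div_le_div_of_nonneg_right hsq hq.le).trans (hP.sq_dotProduct_div_le ha v)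

end Matrix

/-- Sensitivity of the optimal value of the QP with respect to the constraint offset b:
the optimal cost is (aᵀu_d+b)²/(aᵀP⁻¹a) and its derivative in b is the negative of the
optimal multiplier λ* = -2(aᵀu_d+b)/(aᵀP⁻¹a). -/
theorem qp_sensitivity (m : ℕ) (P : Matrix (Fin m) (Fin m) ℝ) (hP : P.PosDef)
    (u_d a : Fin m → ℝ) (b : ℝ) (ha : a ≠ 0) (hactive : a ⬝ᵥ u_d + b < 0) :
    IsLeast ((fun u : Fin m → ℝ => (u - u_d) ⬝ᵥ P.mulVec (u - u_d)) ''
        {u : Fin m → ℝ | a ⬝ᵥ u + b ≥ 0})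
      ((a ⬝ᵥ u_d + b) ^ 2 / (a ⬝ᵥ P⁻¹.mulVec a)) ∧
    HasDerivAt (fun b' : ℝ => (a ⬝ᵥ u_d + b') ^ 2 / (a ⬝ᵥ P⁻¹.mulVec a))
      (-(-2 * (a ⬝ᵥ u_d + b) / (a ⬝ᵥ P⁻¹.mulVec a))) b := by
  have hshift : (fun u : Fin m → ℝ => (u - u_d) ⬝ᵥ P.mulVec (u - u_d)) ''
      {u | a ⬝ᵥ u + b ≥ 0} = (fun v => v ⬝ᵥ P *ᵥ v) '' {v | -(a ⬝ᵥ u_d + b) ≤ a ⬝ᵥ v} := by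
    ext y
    constructor
    · rintro ⟨u, hu, rfl⟩
      exact ⟨u - u_d, by simp only [Set.mem_ofPred_eq, dotProduct_sub] at hu ⊢; linarith, rfl⟩
    · rintro ⟨v, hv, rfl⟩
      exact ⟨v + u_d, by simp only [Set.mem_ofPred_eq, dotProduct_add] at hv ⊢; linarith,
        by simp only [add_sub_cancel_right]⟩
  constructor
  · rw [hshift, ← neg_sq]
    exact hP.isLeast_quadForm_halfspace ha (by linarith)
  · refine (((hasDerivAt_id b).const_add (a ⬝ᵥ u_d)).pow 2).div_const (a ⬝ᵥ P⁻¹ *ᵥ a)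
      |>.congr_deriv (by simp only [id]; ring)
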